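/- arXiv:1812.07199 — 5 statements merged into one kernel-verified Lean document; each statement's English description precedes it below -/
import Mathlib

section
/- Let A = (a_{ij}) be an l×l complex matrix, λ = (λ_1,…,λ_l) ∈ ℂ^l, and d = (d_1,…,d_l) positive integers. Define M(A,λ,d) to be the (d_1+⋯+d_l)-square block matrix whose (i,j) block is a_{ij} J_{d_i×d_j} plus λ_i I_{d_i} on the diagonal blocks, and define the l×l matrix M̄(A,λ,d) = diag(d_1,…,d_l)·A + diag(λ_1,…,λ_l). Then χ_{M(A,λ,d)}(t) = χ_{M̄(A,λ,d)}(t) · ∏_{i=1}^l (t − λ_i)^{d_i−1}, and in particular det M(A,λ,d) = det M̄(A,λ,d) · ∏_{i=1}^l λ_i^{d_i−1}. -/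
/-!
Keep the first index of every block and collect the other `d i - 1` indices of block `i` into
`Σ i, Fin (d i - 1)`. Adding to the first row of each block the other rows of that block turns it
into row `i` of `M̄`; subtracting then the first column of each block from the other columns of
that block clears the upper right corner, leaving a block lower-triangular matrix with diagonal
blocks `M̄` and `diag(λ_i)` (`λ_i` repeated `d i - 1` times). This works over any commutative
ring, and the characteristic polynomial identity is the determinant identity over `R[X]`
applied to `-A` and `X - λ`.
-/

open Matrix Polynomial Finset

variable {R : Type*} [CommRing R]

namespace Matrix

theorem charmatrix_add_diagonal {n : Type*} [Fintype n] [DecidableEq n]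
    (B : Matrix n n R) (v : n → R) :
    (B + diagonal v).charmatrix = -B.map C + diagonal fun i => X - C (v i) := by
  rw [← charmatrix_diagonal, charmatrix, charmatrix, RingHom.mapMatrix_apply,
    RingHom.mapMatrix_apply, Matrix.map_add _ (map_add C)]
  abel

section BlockElimination

variable {ι κ : Type*} [Fintype ι] [Fintype κ] [DecidableEq ι] [DecidableEq κ]

theorem det_fromBlocks_mul_right_add (N : Matrix ι ι R) (B : Matrix κ ι R) (F : Matrix ι κ R)
    (E : Matrix κ κ R) : (fromBlocks N (N * F) B (B * F + E)).det = N.det * E.det := by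
  have hcol : (fromBlocks (1 : Matrix ι ι R) (-F) 0 1).det = 1 := by simp
  calc _ = (fromBlocks N (N * F) B (B * F + E) * fromBlocks 1 (-F) 0 1).det := by
        rw [det_mul, hcol, mul_one]
    _ = (fromBlocks N 0 B E).det := by
        rw [fromBlocks_multiply]
        congr 2 <;> simp
    _ = N.det * E.det := det_fromBlocks_zero₁₂ ..

/-- The block matrix is `[1; Fᵀ] * X * [1, F] + diag(D, E)`; multiplying it on the left by
`[1, F; 0, 1]` brings it into the shape of `det_fromBlocks_mul_right_add`. -/
theorem det_fromBlocks_transpose_mul_add (X D : Matrix ι ι R) (F : Matrix ι κ R)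
    (E : Matrix κ κ R) (hFE : F * E = D * F) :
    (fromBlocks (X + D) (X * F) (Fᵀ * X) (Fᵀ * X * F + E)).det =
      ((1 + F * Fᵀ) * X + D).det * E.det := by
  have hrow : (fromBlocks (1 : Matrix ι ι R) F 0 1).det = 1 := by simp
  rw [← det_fromBlocks_mul_right_add _ (Fᵀ * X) F, ← one_mul (det _), ← hrow, ← det_mul,
    fromBlocks_multiply]
  congr 2
  · simp only [Matrix.one_mul, Matrix.add_mul, Matrix.mul_assoc]; abel
  · simp only [Matrix.one_mul, Matrix.add_mul, Matrix.mul_add, Matrix.mul_assoc, hFE]; abel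
  · simp
  · simp

theorem det_submatrix_sumElim_add_diagonal (A : Matrix ι ι R) (lam : ι → R) (f : κ → ι) :
    (A.submatrix (Sum.elim id f) (Sum.elim id f) + diagonal (lam ∘ Sum.elim id f)).det =
      (diagonal (fun i => 1 + (#{k | f k = i} : R)) * A + diagonal lam).det *
        ∏ k, lam (f k) := by
  set F : Matrix ι κ R := (1 : Matrix ι ι R).submatrix id f
  have hblocks : A.submatrix (Sum.elim id f) (Sum.elim id f) + diagonal (lam ∘ Sum.elim id f) =
      fromBlocks (A + diagonal lam) (A * F) (Fᵀ * A) (Fᵀ * A * F + diagonal (lam ∘ f)) := by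
    ext (i | k) (j | k') <;> simp [F, mul_apply, one_apply, diagonal_apply]
  have hFE : F * diagonal (lam ∘ f) = diagonal lam * F := by
    ext i k
    by_cases h : i = f k <;> simp [F, one_apply, h]
  have hFFt : 1 + F * Fᵀ = diagonal fun i => 1 + (#{k | f k = i} : R) := by
    ext i j
    by_cases h : i = j
    · subst h; simp +contextual [F, mul_apply, one_apply, sum_boole, eq_comm]
    · simp +contextual [F, mul_apply, one_apply, h]
  rw [hblocks, det_fromBlocks_transpose_mul_add _ _ _ _ hFE, hFFt, det_diagonal]
  rfl

end BlockElimination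

end Matrix

section SigmaFin

variable {ι : Type*}

def sumSigmaFinPredEquiv (d : ι → ℕ) (hd : ∀ i, 0 < d i) :
    ι ⊕ (Σ i, Fin (d i - 1)) ≃ Σ i, Fin (d i) where
  toFun := Sum.elim (fun i => ⟨i, ⟨0, hd i⟩⟩) (fun p => ⟨p.1, ⟨p.2 + 1, by omega⟩⟩)
  invFun p := if h : (p.2 : ℕ) = 0 then Sum.inl p.1 else Sum.inr ⟨p.1, ⟨p.2 - 1, by omega⟩⟩
  left_inv := by rintro (i | ⟨i, k⟩) <;> simp
  right_inv := by
    rintro ⟨i, m⟩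
    by_cases h : (m : ℕ) = 0
    · simp [h, Fin.ext_iff]
    · simp [h, Fin.ext_iff]; omega

theorem fst_comp_sumSigmaFinPredEquiv (d : ι → ℕ) (hd : ∀ i, 0 < d i) :
    Sigma.fst ∘ sumSigmaFinPredEquiv d hd = Sum.elim id Sigma.fst := by
  ext (i | p) <;> rfl

variable [Fintype ι] [DecidableEq ι]

theorem card_filter_sigma_fst_eq (d : ι → ℕ) (i : ι) :
    #{p : Σ j, Fin (d j) | p.1 = i} = d i := by
  rw [card_filter, Fintype.sum_sigma]
  simp [apply_ite (f := Finset.card)]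

theorem det_submatrix_sigma_fst_add_diagonal (A : Matrix ι ι R) (lam : ι → R) (d : ι → ℕ)
    (hd : ∀ i, 0 < d i) :
    (A.submatrix Sigma.fst Sigma.fst + diagonal fun p : Σ i, Fin (d i) => lam p.1).det =
      (diagonal (fun i => (d i : R)) * A + diagonal lam).det * ∏ i, lam i ^ (d i - 1) := by
  have hfiber (i : ι) : (1 : R) + #{p : Σ j, Fin (d j - 1) | p.1 = i} = d i := by
    rw [card_filter_sigma_fst_eq, Nat.cast_sub (hd i), Nat.cast_one, add_sub_cancel]
  have hprod : ∏ p : Σ j, Fin (d j - 1), lam p.1 = ∏ i, lam i ^ (d i - 1) := by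
    simp [Fintype.prod_sigma]
  rw [← det_submatrix_equiv_self (sumSigmaFinPredEquiv d hd), submatrix_add, Pi.add_apply,
    Pi.add_apply, submatrix_submatrix, submatrix_diagonal_equiv]
  change (A.submatrix (Sigma.fst ∘ _) (Sigma.fst ∘ _) + diagonal (lam ∘ (Sigma.fst ∘ _))).det = _
  rw [fst_comp_sumSigmaFinPredEquiv, det_submatrix_sumElim_add_diagonal, hprod]
  simp only [hfiber]

theorem charpoly_submatrix_sigma_fst_add_diagonal (A : Matrix ι ι R) (lam : ι → R)
    (d : ι → ℕ) (hd : ∀ i, 0 < d i) :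
    (A.submatrix Sigma.fst Sigma.fst + diagonal fun p : Σ i, Fin (d i) => lam p.1).charpoly =
      (diagonal (fun i => (d i : R)) * A + diagonal lam).charpoly *
        ∏ i, (X - C (lam i)) ^ (d i - 1) := by
  have hdiag : -((diagonal fun i => (d i : R)) * A).map C =
      diagonal (fun i => (d i : R[X])) * -A.map C := by
    rw [Matrix.map_mul, diagonal_map (map_zero _), Matrix.mul_neg]
    simp
  have hsub (π : (Σ i, Fin (d i)) → ι) : -(A.submatrix π π).map C = (-A.map C).submatrix π π := by
    ext; simp
  rw [charpoly, charpoly, charmatrix_add_diagonal, charmatrix_add_diagonal, hdiag, hsub]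
  exact det_submatrix_sigma_fst_add_diagonal (-A.map C) (fun i => X - C (lam i)) d hd

end SigmaFin

/-- For the block matrix `M(A, λ, d)` whose `(i,j)` block is `a_{ij} J_{d_i × d_j}`,
plus `λ_i I_{d_i}` on the diagonal blocks, with `M̄(A, λ, d) = diag(d) A + diag(λ)`:
`χ_M(t) = χ_M̄(t) ∏ i (t - λ_i)^(d_i - 1)` and
`det M = det M̄ ∏ i λ_i^(d_i - 1)`. -/
theorem stmt_3 (l : ℕ) (A : Matrix (Fin l) (Fin l) ℂ) (lam : Fin l → ℂ)
    (d : Fin l → ℕ) (hd : ∀ i, 0 < d i) :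
    let M : Matrix (Σ i : Fin l, Fin (d i)) (Σ i : Fin l, Fin (d i)) ℂ :=
      Matrix.of (fun p q => A p.1 q.1) + Matrix.diagonal (fun p => lam p.1)
    let Mbar : Matrix (Fin l) (Fin l) ℂ :=
      Matrix.of (fun i j => (d i : ℂ) * A i j) + Matrix.diagonal lam
    M.charpoly = Mbar.charpoly *
        ∏ i : Fin l, (Polynomial.X - Polynomial.C (lam i)) ^ (d i - 1) ∧
    M.det = Mbar.det * ∏ i : Fin l, lam i ^ (d i - 1) := by
  intro M Mbar
  have hMbar : Mbar = diagonal (fun i => (d i : ℂ)) * A + diagonal lam := by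
    ext i j
    simp [Mbar, diagonal_mul]
  rw [hMbar]
  exact ⟨charpoly_submatrix_sigma_fst_add_diagonal A lam d hd,
    det_submatrix_sigma_fst_add_diagonal A lam d hd⟩
end

section
/- Let C = (C^{ij})_{1≤i,j≤l} be an nl×nl block matrix where each block C^{ij} is an n×n circulant matrix. For 0 ≤ k ≤ n−1 let C̄_k be the l×l matrix whose (i,j) entry is the eigenvalue of C^{ij} associated to the eigenvector z_{n,k} = (ζ_n^{sk})_{0≤s≤n−1}. Then the characteristic polynomial of C is χ_C(t) = ∏_{k=0}^{n−1} χ_{C̄_k}(t), and det C = ∏_{k=0}^{n−1} det C̄_k. -/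
/-!
When `ζ ^ n = 1`, the Vandermonde matrix `V = (ζ ^ (s * k))_{s,k}` diagonalizes every
circulant `n × n` matrix: its `k`-th column `z_{n,k}` is an eigenvector with eigenvalue
`∑ s, c s * ζ ^ (s * k)`. Hence conjugating `C` by `1 ⊗ V` diagonalizes every block `C^{ij}`
at once, and regrouping the indices by `k` shows that `C` is similar to the block diagonal
matrix with blocks `C̄_k`. For primitive `ζ`, `V` is invertible, so `C` and that block
diagonal matrix share characteristic polynomial and determinant, both multiplicative in blocks.
-/

open Matrix Kronecker

theorem pow_val_add_of_pow_eq_one {M : Type*} [Monoid M] {n : ℕ} {ζ : M} (hζ : ζ ^ n = 1)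
    (a b : Fin n) :
    ζ ^ ((a + b : Fin n) : ℕ) = ζ ^ (a : ℕ) * ζ ^ (b : ℕ) := by
  rw [Fin.val_add, ← pow_eq_pow_mod _ hζ, pow_add]

namespace Matrix

section CommRing

variable {R : Type*} [CommRing R]

theorem charmatrix_blockDiagonal {m o : Type*} [Fintype m] [DecidableEq m] [Fintype o]
    [DecidableEq o] (M : o → Matrix m m R) :
    charmatrix (blockDiagonal M) = blockDiagonal fun k => charmatrix (M k) := by
  ext ⟨i, k⟩ ⟨j, k'⟩
  by_cases hk : k = k'
  · subst hk
    by_cases hij : i = j <;> simp [blockDiagonal_apply, hij]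
  · simp [blockDiagonal_apply, hk]

theorem charpoly_blockDiagonal {m o : Type*} [Fintype m] [DecidableEq m] [Fintype o]
    [DecidableEq o] (M : o → Matrix m m R) :
    (blockDiagonal M).charpoly = ∏ k, (M k).charpoly := by
  rw [charpoly, charmatrix_blockDiagonal, det_blockDiagonal]
  rfl

theorem eq_mul_mul_nonsing_inv_of_mul_eq {m : Type*} [Fintype m] [DecidableEq m]
    {A B P : Matrix m m R} (hP : IsUnit P) (h : A * P = P * B) : A = P * B * P⁻¹ := by
  rw [← h, mul_nonsing_inv_cancel_right _ _ ((isUnit_iff_isUnit_det P).mp hP)]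

theorem mul_vandermonde_pow_of_circulant {n : ℕ} [NeZero n] {ζ : R} (hζ : ζ ^ n = 1)
    (c : Fin n → R) {M : Matrix (Fin n) (Fin n) R} (hM : ∀ s t, M s t = c (t - s)) :
    M * vandermonde (fun s : Fin n => ζ ^ (s : ℕ)) =
      vandermonde (fun s : Fin n => ζ ^ (s : ℕ)) *
        diagonal fun k : Fin n => ∑ s : Fin n, c s * ζ ^ ((s : ℕ) * (k : ℕ)) := by
  ext s k
  rw [mul_apply, mul_diagonal, Finset.mul_sum]
  refine (Fintype.sum_equiv (Equiv.addRight s) _ _ fun u => ?_).symm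
  rw [Equiv.coe_addRight, vandermonde_apply, vandermonde_apply, hM, add_sub_cancel_right,
    pow_val_add_of_pow_eq_one hζ, mul_pow, pow_mul]
  ring

theorem of_blocks_mul_one_kronecker_eq {l n : Type*} [Fintype l] [DecidableEq l] [Fintype n]
    [DecidableEq n] {B : l → l → Matrix n n R} {F : Matrix n n R} {D : n → Matrix l l R}
    (h : ∀ i j, B i j * F = F * diagonal fun k => D k i j) :
    (of fun p q : l × n => B p.1 q.1 p.2 q.2) * (1 ⊗ₖ F) = (1 ⊗ₖ F) * blockDiagonal D := by
  ext ⟨i, s⟩ ⟨j, k⟩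
  have hik := congr_fun₂ (h i j) s k
  rw [mul_diagonal, mul_apply] at hik
  simpa [mul_apply, Fintype.sum_prod_type, blockDiagonal_apply, one_apply] using hik

end CommRing

theorem isUnit_vandermonde_pow {K : Type*} [Field K] {n : ℕ} {ζ : K}
    (hζ : IsPrimitiveRoot ζ n) :
    IsUnit (vandermonde fun s : Fin n => ζ ^ (s : ℕ)) := by
  rw [isUnit_iff_isUnit_det, isUnit_iff_ne_zero, det_vandermonde_ne_zero_iff]
  exact fun s t hst => Fin.ext (hζ.pow_inj s.isLt t.isLt hst)

end Matrix

/-- Block matrices with circulant blocks: the characteristic polynomial (resp.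
determinant) of the block matrix `C = (C^{ij})` with `n × n` circulant blocks is the
product over `k` of the characteristic polynomials (resp. determinants) of the `l × l`
matrices `C̄_k` whose `(i,j)` entry is the eigenvalue of `C^{ij}` on `z_{n,k}`. -/
theorem stmt_4 (l n : ℕ) [NeZero n]
    (Cb : Fin l → Fin l → Matrix (Fin n) (Fin n) ℂ)
    (hCb : ∀ i j (s t : Fin n), Cb i j s t = Cb i j 0 (t - s))
    (ζ : ℂ) (hζ : IsPrimitiveRoot ζ n) :
    let C : Matrix (Fin l × Fin n) (Fin l × Fin n) ℂ :=
      Matrix.of fun p q => Cb p.1 q.1 p.2 q.2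
    let Cbar : Fin n → Matrix (Fin l) (Fin l) ℂ := fun k =>
      Matrix.of fun i j => ∑ s : Fin n, Cb i j 0 s * ζ ^ ((s : ℕ) * (k : ℕ))
    C.charpoly = ∏ k : Fin n, (Cbar k).charpoly ∧
    C.det = ∏ k : Fin n, (Cbar k).det := by
  intro C Cbar
  set U := (1 : Matrix (Fin l) (Fin l) ℂ) ⊗ₖ vandermonde fun s : Fin n => ζ ^ (s : ℕ)
  have hU : IsUnit U := by
    rw [isUnit_iff_isUnit_det, det_kronecker, det_one, one_pow, one_mul]
    exact ((isUnit_iff_isUnit_det _).mp (isUnit_vandermonde_pow hζ)).pow _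
  have hC : C = U * blockDiagonal Cbar * U⁻¹ :=
    eq_mul_mul_nonsing_inv_of_mul_eq hU <| of_blocks_mul_one_kronecker_eq fun i j =>
      mul_vandermonde_pow_of_circulant hζ.pow_eq_one _ (hCb i j)
  constructor
  · rw [hC, ← hU.unit_spec, charpoly_units_conj, charpoly_blockDiagonal]
  · rw [hC, det_conj hU, det_blockDiagonal]
end

section
/- (Moon's formula) Let F be a spanning forest of the complete graph K_n with connected components of vertex sizes j_1, …, j_k. The number of spanning trees of K_n containing all edges of F is n^{k−2} ∏_{i=1}^k j_i. -/
/-!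
Write `t(F)` for the number of spanning trees containing the forest `F`, `j_x` for the size of
the component of `x` and `W(F) = ∏ j_i`. We induct on the number `k` of components. Every tree
`T ⊇ F` has `(n - 1) - (n - k) = k - 1` edges joining different components of `F`, and for such an
edge `ab` the trees containing `F + ab` are exactly the trees `T ⊇ F` through `ab`. Counting pairs
(tree, ordered edge) both ways, and using that `F + ab` is a forest with `k - 1` components and
`W(F + ab) = W(F) (1/j_a + 1/j_b)`, gives
`2 (k - 1) t(F) = n^(k-3) W(F) ∑_{a ≁ b} (1/j_a + 1/j_b) = 2 (k - 1) n^(k-2) W(F)`,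
since `∑_x 1/j_x = k`.
-/

open Finset

namespace SimpleGraph

variable {V : Type*} {G T : SimpleGraph V} {u v x y : V}

lemma reachable_sup_edge_iff :
    (G ⊔ edge u v).Reachable x y ↔
      G.Reachable x y ∨ G.Reachable x u ∧ G.Reachable v y ∨
        G.Reachable x v ∧ G.Reachable u y := by
  constructor
  · rintro ⟨w⟩
    induction w with
    | nil => exact .inl .rfl
    | @cons a b c hab _ ih =>
      rw [sup_adj, edge_adj] at hab
      rcases hab with hab | ⟨⟨rfl, rfl⟩ | ⟨rfl, rfl⟩, -⟩
      · have := hab.reachable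
        rcases ih with h | ⟨h₁, h₂⟩ | ⟨h₁, h₂⟩
        exacts [.inl (this.trans h), .inr (.inl ⟨this.trans h₁, h₂⟩),
          .inr (.inr ⟨this.trans h₁, h₂⟩)]
      · rcases ih with h | ⟨h₁, h₂⟩ | ⟨-, h₂⟩
        exacts [.inr (.inl ⟨.rfl, h⟩), .inl (h₁.symm.trans h₂), .inl h₂]
      · rcases ih with h | ⟨-, h₂⟩ | ⟨h₁, h₂⟩
        exacts [.inr (.inr ⟨.rfl, h⟩), .inl h₂, .inl (h₁.symm.trans h₂)]
  · have hle : G ≤ G ⊔ edge u v := le_sup_left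
    have huv : (G ⊔ edge u v).Reachable u v := by
      obtain rfl | hne := eq_or_ne u v
      · rfl
      · exact Adj.reachable (by simp [edge_adj, hne])
    rintro (h | ⟨h₁, h₂⟩ | ⟨h₁, h₂⟩)
    · exact h.mono hle
    · exact ((h₁.mono hle).trans huv).trans (h₂.mono hle)
    · exact ((h₁.mono hle).trans huv.symm).trans (h₂.mono hle)

noncomputable def connectedComponentSupEdgeEquiv (huv : ¬G.Reachable u v) :
    {c : G.ConnectedComponent // c ≠ G.connectedComponentMk v} ≃
      (G ⊔ edge u v).ConnectedComponent := by
  refine .ofBijective (fun c => c.1.map (Hom.ofLE le_sup_left)) ⟨?_, ?_⟩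
  · rintro ⟨c, hc⟩ ⟨d, hd⟩ h
    induction c using ConnectedComponent.ind with | _ x => ?_
    induction d using ConnectedComponent.ind with | _ y => ?_
    simp only [ConnectedComponent.map_mk, Hom.coe_ofLE, id_eq, ConnectedComponent.eq,
      reachable_sup_edge_iff] at h
    simp only [ne_eq, ConnectedComponent.eq] at hc hd
    rw [Subtype.mk.injEq, ConnectedComponent.eq]
    rcases h with h | ⟨-, h⟩ | ⟨h, -⟩
    exacts [h, absurd h.symm hd, absurd h hc]
  · intro c
    induction c using ConnectedComponent.ind with | _ x => ?_
    by_cases hx : G.Reachable x v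
    · refine ⟨⟨G.connectedComponentMk u, by simpa [ConnectedComponent.eq]⟩, ?_⟩
      simp only [ConnectedComponent.map_mk, Hom.coe_ofLE, id_eq, ConnectedComponent.eq,
        reachable_sup_edge_iff]
      exact .inr (.inl ⟨.rfl, hx.symm⟩)
    · exact ⟨⟨G.connectedComponentMk x, by simpa [ConnectedComponent.eq]⟩, rfl⟩

lemma card_connectedComponent_sup_edge [Finite V] (huv : ¬G.Reachable u v) :
    Nat.card (G ⊔ edge u v).ConnectedComponent + 1 = Nat.card G.ConnectedComponent := by
  classical
  rw [← Nat.card_congr (connectedComponentSupEdgeEquiv huv), ← Finite.card_option,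
    Nat.card_congr (Equiv.optionSubtypeNe _)]

lemma supp_connectedComponentMk_sup_edge_left :
    ((G ⊔ edge u v).connectedComponentMk u).supp =
      (G.connectedComponentMk u).supp ∪ (G.connectedComponentMk v).supp := by
  ext y
  simp only [Set.mem_union, ConnectedComponent.mem_supp_iff, ConnectedComponent.eq,
    reachable_sup_edge_iff]
  grind [Reachable.rfl, Reachable.symm]

lemma supp_connectedComponentMk_sup_edge_of_not_reachable (hxu : ¬G.Reachable x u)
    (hxv : ¬G.Reachable x v) :
    ((G ⊔ edge u v).connectedComponentMk x).supp = (G.connectedComponentMk x).supp := by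
  ext y
  simp only [ConnectedComponent.mem_supp_iff, ConnectedComponent.eq, reachable_sup_edge_iff]
  grind [Reachable.symm]

noncomputable def componentSize (G : SimpleGraph V) (x : V) : ℕ :=
  Nat.card (G.connectedComponentMk x).supp

lemma componentSize_sup_edge_left [Finite V] (huv : ¬G.Reachable u v) :
    (G ⊔ edge u v).componentSize u = G.componentSize u + G.componentSize v := by
  rw [componentSize, supp_connectedComponentMk_sup_edge_left, Nat.card_coe_set_eq,
    Set.ncard_union_eq, ← Nat.card_coe_set_eq, ← Nat.card_coe_set_eq]
  · rfl
  · exact G.pairwise_disjoint_supp_connectedComponent (by simpa [ConnectedComponent.eq])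

lemma componentSize_sup_edge_of_not_reachable (hxu : ¬G.Reachable x u)
    (hxv : ¬G.Reachable x v) : (G ⊔ edge u v).componentSize x = G.componentSize x := by
  rw [componentSize, supp_connectedComponentMk_sup_edge_of_not_reachable hxu hxv, componentSize]

lemma componentSize_pos [Finite V] (x : V) : 0 < G.componentSize x :=
  have : Nonempty (G.connectedComponentMk x).supp := ⟨⟨x, rfl⟩⟩
  Nat.card_pos

noncomputable def componentSizeProd (G : SimpleGraph V) : ℚ :=
  ∏ᶠ c : G.ConnectedComponent, (Nat.card c.supp : ℚ)

lemma Connected.componentSizeProd_eq (hG : G.Connected) :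
    G.componentSizeProd = Nat.card V := by
  obtain ⟨x⟩ := hG.nonempty
  have hsupp : (G.connectedComponentMk x).supp = Set.univ :=
    Set.eq_univ_of_forall fun y => (ConnectedComponent.eq.mpr (hG.preconnected y x))
  rw [componentSizeProd, finprod_eq_single _ (G.connectedComponentMk x)
    fun c hc => absurd (hG.preconnected.subsingleton_connectedComponent.elim _ _) hc,
    hsupp, Nat.card_univ]

lemma componentSizeProd_sup_edge [Finite V] (huv : ¬G.Reachable u v) :
    (G ⊔ edge u v).componentSizeProd =
      G.componentSizeProd * ((G.componentSize u : ℚ)⁻¹ + (G.componentSize v : ℚ)⁻¹) := by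
  classical
  have := Fintype.ofFinite G.ConnectedComponent
  have := Fintype.ofFinite (G ⊔ edge u v).ConnectedComponent
  let g (c : G.ConnectedComponent) : ℚ :=
    Nat.card (c.map (Hom.ofLE (le_sup_left : G ≤ G ⊔ edge u v))).supp
  have hprod : (G ⊔ edge u v).componentSizeProd =
      ∏ c ∈ univ.erase (G.connectedComponentMk v), g c := by
    rw [componentSizeProd, finprod_eq_prod_of_fintype,
      ← (connectedComponentSupEdgeEquiv huv).prod_comp]
    exact (prod_subtype _ (by simp) g).symm
  have hu : G.connectedComponentMk u ∈ univ.erase (G.connectedComponentMk v) :=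
    mem_erase.mpr ⟨by simpa [ConnectedComponent.eq], mem_univ _⟩
  have hgu : g (G.connectedComponentMk u) = G.componentSize u + G.componentSize v := by
    rw [← Nat.cast_add, ← componentSize_sup_edge_left huv]
    rfl
  have hg : ∀ c ∈ (univ.erase (G.connectedComponentMk v)).erase (G.connectedComponentMk u),
      g c = Nat.card c.supp := by
    intro c hc
    induction c using ConnectedComponent.ind with | _ x => ?_
    simp only [mem_erase, ne_eq, ConnectedComponent.eq] at hc
    exact congrArg Nat.cast (componentSize_sup_edge_of_not_reachable hc.1 hc.2.1)
  rw [hprod, componentSizeProd, finprod_eq_prod_of_fintype, ← mul_prod_erase _ _ hu,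
    ← mul_prod_erase _ _ (mem_univ (G.connectedComponentMk v)), ← mul_prod_erase _ _ hu,
    prod_congr rfl hg, hgu]
  have hu₀ : (G.componentSize u : ℚ) ≠ 0 := by exact_mod_cast (G.componentSize_pos u).ne'
  have hv₀ : (G.componentSize v : ℚ) ≠ 0 := by exact_mod_cast (G.componentSize_pos v).ne'
  field_simp
  rw [componentSize, componentSize]
  ring

lemma card_connectedComponent_bot :
    Nat.card (⊥ : SimpleGraph V).ConnectedComponent = Nat.card V :=
  (Nat.card_eq_of_bijective _ ⟨fun _ _ h => reachable_bot.mp (ConnectedComponent.exact h),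
    fun c => c.exists_rep⟩).symm

theorem IsAcyclic.ncard_edgeSet_add_card_connectedComponent [Finite V] (hG : G.IsAcyclic) :
    G.edgeSet.ncard + Nat.card G.ConnectedComponent = Nat.card V := by
  induction G using WellFoundedLT.induction with | _ G ih => ?_
  obtain hG₀ | ⟨e, he⟩ := G.edgeSet.eq_empty_or_nonempty
  · rw [edgeSet_eq_empty.mp hG₀, card_connectedComponent_bot, edgeSet_bot, Set.ncard_empty,
      zero_add]
  induction e with | h u v => ?_
  have hsup : G.deleteEdges {s(u, v)} ⊔ edge u v = G :=
    sdiff_sup_cancel ((G.edge_le_iff).mpr (.inr he))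
  have hbridge : ¬(G.deleteEdges {s(u, v)}).Reachable u v :=
    isAcyclic_iff_forall_adj_isBridge.mp hG he
  have hlt : G.deleteEdges {s(u, v)} < G := by
    simpa only [hsup] using lt_sup_edge _ u v he.ne fun h => hbridge h.reachable
  have hD := ih _ hlt (hG.anti hlt.le)
  have hcc := card_connectedComponent_sup_edge hbridge
  rw [hsup] at hcc
  rw [edgeSet_deleteEdges, ← Set.ncard_sdiff_singleton_add_one he] at *
  omega

lemma IsAcyclic.adj_of_le_of_reachable (hT : T.IsAcyclic) (hle : G ≤ T) (hadj : T.Adj x y)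
    (hr : G.Reachable x y) : G.Adj x y := by
  by_contra hG
  refine isAcyclic_iff_forall_adj_isBridge.mp hT hadj (hr.mono fun a b hab => ?_)
  refine (deleteEdges_adj ..).mpr ⟨hle hab, ?_⟩
  rw [Set.mem_singleton_iff, Sym2.eq_iff]
  rintro (⟨rfl, rfl⟩ | ⟨rfl, rfl⟩)
  exacts [hG hab, hG hab.symm]

def treesAbove (G : SimpleGraph V) : Set (SimpleGraph V) := {T | G ≤ T ∧ T.IsTree}

lemma treesAbove_sup_edge (hne : u ≠ v) :
    treesAbove (G ⊔ edge u v) = {T ∈ treesAbove G | T.Adj u v} := by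
  ext T
  simp only [treesAbove, Set.mem_ofPred_eq, sup_le_iff, edge_le_iff, hne, false_or]
  tauto

lemma IsTree.treesAbove_eq (hG : G.IsTree) : treesAbove G = {G} := by
  have hmax := (isTree_iff_maximal_isAcyclic.mp hG).2
  ext T
  refine ⟨fun ⟨hle, hT⟩ => (hmax.eq_of_le hT.isAcyclic hle).symm, ?_⟩
  rintro rfl
  exact ⟨le_rfl, hG⟩

section Fintype

open scoped Classical

variable [Fintype V]

lemma componentSize_eq_card_filter (x : V) : G.componentSize x = #{y | G.Reachable x y} := by
  rw [componentSize, Nat.card_eq_card_toFinset]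
  congr 1
  ext y
  simp [ConnectedComponent.eq, reachable_comm]

lemma componentSize_le_card (x : V) : G.componentSize x ≤ Fintype.card V :=
  G.componentSize_eq_card_filter x ▸ card_filter_le _ _

lemma sum_inv_componentSize :
    ∑ x, (G.componentSize x : ℚ)⁻¹ = Nat.card G.ConnectedComponent := by
  have := Fintype.ofFinite G.ConnectedComponent
  rw [← sum_fiberwise univ G.connectedComponentMk, Nat.card_eq_fintype_card, ← card_univ,
    card_eq_sum_ones, Nat.cast_sum]
  refine sum_congr rfl fun c _ => ?_
  induction c using ConnectedComponent.ind with | _ x => ?_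
  have hfib : ∀ y ∈ ({y | G.connectedComponentMk y = G.connectedComponentMk x} : Finset V),
      G.componentSize y = G.componentSize x := by
    intro y hy
    rw [componentSize, (mem_filter.mp hy).2, componentSize]
  have hcard : #{y | G.connectedComponentMk y = G.connectedComponentMk x} = G.componentSize x := by
    simp_rw [componentSize_eq_card_filter, ConnectedComponent.eq, reachable_comm]
  have := G.componentSize_pos x
  rw [sum_congr rfl fun y hy => by rw [hfib y hy], sum_const, nsmul_eq_mul, hcard]
  field_simp
  simp

lemma card_filter_not_reachable (x : V) :
    #{y | ¬G.Reachable x y} = Fintype.card V - G.componentSize x := by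
  rw [filter_not, card_sdiff_of_subset (filter_subset _ _), card_univ, componentSize_eq_card_filter]

lemma sum_not_reachable_inv_componentSize :
    ∑ p : V × V with ¬G.Reachable p.1 p.2, (G.componentSize p.1 : ℚ)⁻¹ =
      Fintype.card V * (Nat.card G.ConnectedComponent - 1) := by
  rw [sum_filter, Fintype.sum_prod_type]
  simp only [← sum_filter, sum_const, nsmul_eq_mul]
  have hterm : ∀ x, (#{y | ¬G.Reachable x y} : ℚ) * (G.componentSize x : ℚ)⁻¹ =
      Fintype.card V * (G.componentSize x : ℚ)⁻¹ - 1 := by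
    intro x
    have := G.componentSize_pos x
    rw [card_filter_not_reachable, Nat.cast_sub (G.componentSize_le_card x)]
    field_simp
  rw [sum_congr rfl fun x _ => hterm x, sum_sub_distrib, ← mul_sum, sum_inv_componentSize]
  simp [mul_sub]

lemma sum_not_reachable_inv_componentSize_add_inv :
    ∑ p : V × V with ¬G.Reachable p.1 p.2,
        ((G.componentSize p.1 : ℚ)⁻¹ + (G.componentSize p.2 : ℚ)⁻¹) =
      2 * (Fintype.card V * (Nat.card G.ConnectedComponent - 1)) := by
  have hswap : ∑ p : V × V with ¬G.Reachable p.1 p.2, (G.componentSize p.2 : ℚ)⁻¹ =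
      ∑ p : V × V with ¬G.Reachable p.1 p.2, (G.componentSize p.1 : ℚ)⁻¹ :=
    sum_equiv (Equiv.prodComm V V) (by simp [reachable_comm]) (by simp)
  rw [sum_add_distrib, hswap, sum_not_reachable_inv_componentSize, two_mul]

lemma card_filter_adj (G : SimpleGraph V) :
    #{p : V × V | G.Adj p.1 p.2} = 2 * G.edgeSet.ncard := by
  rw [← coe_edgeFinset, Set.ncard_coe_finset, ← sum_degrees_eq_twice_card_edges, card_filter,
    Fintype.sum_prod_type]
  simp [← card_neighborFinset_eq_degree, neighborFinset_eq_filter]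

lemma IsTree.card_filter_adj_not_reachable (hT : T.IsTree) (hle : G ≤ T) (hG : G.IsAcyclic) :
    #{p : V × V | T.Adj p.1 p.2 ∧ ¬G.Reachable p.1 p.2} =
      2 * (Nat.card G.ConnectedComponent - 1) := by
  have hfilter : ({p : V × V | T.Adj p.1 p.2 ∧ ¬G.Reachable p.1 p.2} : Finset (V × V)) =
      ({p : V × V | T.Adj p.1 p.2} : Finset (V × V)) \
        ({p : V × V | G.Adj p.1 p.2} : Finset (V × V)) := by
    ext p
    simp only [mem_filter, mem_sdiff, mem_univ, true_and]
    exact ⟨fun h => ⟨h.1, fun hG => h.2 hG.reachable⟩,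
      fun h => ⟨h.1, fun hr => h.2 (hT.isAcyclic.adj_of_le_of_reachable hle h.1 hr)⟩⟩
  have hTedges : T.edgeSet.ncard + 1 = Fintype.card V := by
    rw [← coe_edgeFinset, Set.ncard_coe_finset]
    exact hT.card_edgeFinset
  have hGedges := hG.ncard_edgeSet_add_card_connectedComponent
  rw [Nat.card_eq_fintype_card (α := V)] at hGedges
  rw [hfilter, card_sdiff_of_subset (monotone_filter_right _ fun p _ => @hle p.1 p.2),
    card_filter_adj, card_filter_adj]
  omega

theorem IsAcyclic.sum_ncard_treesAbove_sup_edge (hG : G.IsAcyclic) :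
    ∑ p : V × V with ¬G.Reachable p.1 p.2, (treesAbove (G ⊔ edge p.1 p.2)).ncard =
      2 * (Nat.card G.ConnectedComponent - 1) * (treesAbove G).ncard := by
  let r (p : V × V) (T : SimpleGraph V) : Prop := T.Adj p.1 p.2
  have hterm : ∀ p ∈ ({p | ¬G.Reachable p.1 p.2} : Finset (V × V)),
      (treesAbove (G ⊔ edge p.1 p.2)).ncard = #((treesAbove G).toFinset.bipartiteAbove r p) := by
    intro p hp
    have hne : p.1 ≠ p.2 := fun h => (mem_filter.mp hp).2 (h ▸ .rfl)
    rw [treesAbove_sup_edge hne, ← Set.ncard_coe_finset, bipartiteAbove, coe_filter]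
    simp [r]
  have hbelow : ∀ T ∈ (treesAbove G).toFinset,
      #(({p | ¬G.Reachable p.1 p.2} : Finset (V × V)).bipartiteBelow r T) =
        2 * (Nat.card G.ConnectedComponent - 1) := by
    intro T hT
    obtain ⟨hle, hT⟩ := Set.mem_toFinset.mp hT
    rw [bipartiteBelow, filter_filter, ← hT.card_filter_adj_not_reachable hle hG]
    simp_rw [r, and_comm]
  rw [sum_congr rfl hterm, sum_card_bipartiteAbove_eq_sum_card_bipartiteBelow,
    sum_congr rfl hbelow, sum_const, smul_eq_mul, Set.ncard_eq_toFinset_card', mul_comm]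

-- Moon's formula for `k + 1` components, multiplied by `n` to keep the exponent natural.
theorem IsAcyclic.ncard_treesAbove_mul_card {k : ℕ} (hG : G.IsAcyclic)
    (hk : Nat.card G.ConnectedComponent = k + 1) :
    ((treesAbove G).ncard : ℚ) * Fintype.card V =
      (Fintype.card V : ℚ) ^ k * G.componentSizeProd := by
  induction k generalizing G with
  | zero =>
    obtain ⟨hsub, ⟨c⟩⟩ := Nat.card_eq_one_iff_unique.mp hk
    have : Nonempty V := ⟨c.exists_rep.choose⟩
    have hconn : G.Connected := ⟨fun _ _ => ConnectedComponent.exact (hsub.elim _ _)⟩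
    rw [IsTree.treesAbove_eq ⟨hconn, hG⟩, Set.ncard_singleton, hconn.componentSizeProd_eq,
      Nat.card_eq_fintype_card]
    ring
  | succ k ih =>
    have hterm : ∀ p ∈ ({p : V × V | ¬G.Reachable p.1 p.2} : Finset (V × V)),
        ((treesAbove (G ⊔ edge p.1 p.2)).ncard : ℚ) * Fintype.card V =
          (Fintype.card V : ℚ) ^ k * G.componentSizeProd *
            ((G.componentSize p.1 : ℚ)⁻¹ + (G.componentSize p.2 : ℚ)⁻¹) := by
      intro p hp
      have hp : ¬G.Reachable p.1 p.2 := (mem_filter.mp hp).2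
      have hk' := card_connectedComponent_sup_edge hp
      rw [ih (hG.sup_edge_of_not_reachable hp) (by omega), componentSizeProd_sup_edge hp,
        mul_assoc]
    have hcount := congrArg (Nat.cast (R := ℚ)) hG.sum_ncard_treesAbove_sup_edge
    push_cast [hk] at hcount
    refine mul_left_cancel₀ (by positivity : (2 * (k + 1) : ℚ) ≠ 0) ?_
    calc 2 * (k + 1) * ((treesAbove G).ncard * Fintype.card V : ℚ)
        = ∑ p : V × V with ¬G.Reachable p.1 p.2,
            ((treesAbove (G ⊔ edge p.1 p.2)).ncard : ℚ) * Fintype.card V := by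
          rw [← sum_mul, hcount]
          ring
      _ = (Fintype.card V : ℚ) ^ k * G.componentSizeProd *
            ∑ p : V × V with ¬G.Reachable p.1 p.2,
              ((G.componentSize p.1 : ℚ)⁻¹ + (G.componentSize p.2 : ℚ)⁻¹) := by
          rw [sum_congr rfl hterm, mul_sum]
      _ = 2 * (k + 1) * ((Fintype.card V : ℚ) ^ (k + 1) * G.componentSizeProd) := by
          rw [sum_not_reachable_inv_componentSize_add_inv, hk]
          push_cast
          ring

end Fintype

end SimpleGraph

/-- Moon's formula: the number of spanning trees of `K_n` containing a given spanning
forest `F` with `k` connected components of sizes `j_1, …, j_k` is `n^(k-2) ∏ i j_i`. -/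
theorem stmt_5 (n : ℕ) (hn : 0 < n) (F : SimpleGraph (Fin n)) (hF : F.IsAcyclic)
    (k : ℕ) (hk : k = Nat.card F.ConnectedComponent) :
    ({T : SimpleGraph (Fin n) | F ≤ T ∧ T.IsTree}.ncard : ℚ)
      = (n : ℚ) ^ ((k : ℤ) - 2) * ∏ᶠ c : F.ConnectedComponent, (Nat.card c.supp : ℚ) := by
  have : Nonempty (Fin n) := ⟨⟨0, hn⟩⟩
  obtain ⟨m, hm⟩ : ∃ m, Nat.card F.ConnectedComponent = m + 1 :=
    Nat.exists_eq_add_one.mpr Nat.card_pos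
  have key := hF.ncard_treesAbove_mul_card hm
  rw [Fintype.card_fin] at key
  have hn' : (n : ℚ) ≠ 0 := by positivity
  rw [hk, hm, Nat.cast_succ, show (m : ℤ) + 1 - 2 = m - 1 by ring, zpow_sub_one₀ hn',
    zpow_natCast, mul_right_comm]
  exact (eq_mul_inv_iff_mul_eq₀ hn').mpr key
end

section
/- Let n = 2l+1 be odd, ζ = ζ_n a primitive n-th root of unity, and for 1 ≤ k ≤ n−1 define the l×l matrix C̄_k with (i,j) entry equal to −(1+ζ^{ik})(1+ζ^{−jk}) for i ≠ j and −(1+ζ^{ik})(1+ζ^{−ik}) − 2 for i = j (1 ≤ i,j ≤ l). Then C̄_k + 2I_l has rank one, and the eigenvalues of C̄_k are −2 with multiplicity l−1 and −n with multiplicity 1. -/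
/-! Write `z = ζ^k`, so `ξ_i = 1 + z^i` and `ξ'_i = 1 + z^{-i}`. Then `C̄_k + 2I = -ξ ξ'ᵀ` has rank
one, and the characteristic polynomial of a rank-one matrix `u vᵀ` is `X^{l-1} (X - v ⬝ u)`;
shifting by `-2` gives the claim once `ξ' ⬝ ξ = ∑ (2 + z^i + z^{-i}) = 2l - 1`. The last sum is
`2l - 1` because `z^{-i} = z^{2l+1-i}`, so the `z^{±i}` for `1 ≤ i ≤ l` are exactly
`z, z^2, …, z^{2l}`, whose sum is `-1` since `z ≠ 1` is a `(2l+1)`-th root of unity. -/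

open Matrix Polynomial Finset

theorem Matrix.rank_vecMulVec_eq_one {K m n : Type*} [Field K] [Fintype n] [DecidableEq n]
    [Finite m] {w : m → K} {v : n → K} (hw : w ≠ 0) (hv : v ≠ 0) :
    (vecMulVec w v).rank = 1 := by
  refine le_antisymm (rank_vecMulVec_le w v) (Nat.one_le_iff_ne_zero.mpr fun h => ?_)
  rw [rank, Submodule.finrank_eq_zero, LinearMap.range_eq_bot, ← toLin'_apply',
    LinearEquiv.map_eq_zero_iff] at h
  obtain ⟨i, hi⟩ := Function.ne_iff.mp hw
  obtain ⟨j, hj⟩ := Function.ne_iff.mp hv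
  exact mul_ne_zero hi hj congr($h i j)

theorem Matrix.charpoly_vecMulVec_sub_scalar {R n : Type*} [CommRing R] [Fintype n]
    [DecidableEq n] [Nonempty n] (u v : n → R) (μ : R) :
    (vecMulVec u v - scalar n μ).charpoly
      = (X + C μ) ^ (Fintype.card n - 1) * (X + C μ - C (u ⬝ᵥ v)) := by
  rw [charpoly_sub_scalar, charpoly_vecMulVec, ← pow_sub_one_mul Fintype.card_ne_zero]
  simp only [sub_comp, mul_comp, pow_comp, X_comp, C_comp, smul_eq_C_mul]
  ring

theorem one_add_pow_ne_zero_of_pow_eq_one {R : Type*} [CommRing R] [NeZero (2 : R)] {z : R}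
    {n : ℕ} (hn : Odd n) (hz : z ^ n = 1) (m : ℕ) : 1 + z ^ m ≠ 0 := by
  intro h
  have hzm : (z ^ m) ^ n = 1 := by rw [← pow_mul, mul_comm, pow_mul, hz, one_pow]
  rw [eq_neg_of_add_eq_zero_right h, hn.neg_one_pow] at hzm
  have h2 : (2 : R) = 0 := by linear_combination -hzm
  exact two_ne_zero h2

theorem sum_range_pow_succ_add_inv_pow_succ {K : Type*} [Field K] {z : K} {l : ℕ}
    (hz : z ^ (2 * l + 1) = 1) (hz1 : z ≠ 1) :
    ∑ i ∈ range l, (z ^ (i + 1) + z⁻¹ ^ (i + 1)) = -1 := by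
  have hgeom : ∑ i ∈ range (2 * l + 1), z ^ i = 0 := by
    rw [geom_sum_eq hz1, hz, sub_self, zero_div]
  have hinv : ∀ i ∈ range l, z⁻¹ ^ (i + 1) = z ^ (l + (l - 1 - i) + 1) := by
    intro i hi
    have hi := mem_range.mp hi
    refine (inv_pow z (i + 1)).trans (inv_eq_of_mul_eq_one_right ?_)
    rw [← pow_add, ← hz]
    congr 1
    omega
  rw [sum_add_distrib, sum_congr rfl hinv, sum_range_reflect (fun j => z ^ (l + j + 1))]
  rw [sum_range_succ', two_mul, sum_range_add, pow_zero] at hgeom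
  linear_combination hgeom

theorem sum_range_one_add_pow_mul_one_add_inv_pow {K : Type*} [Field K] {z : K} {l : ℕ}
    (hz : z ^ (2 * l + 1) = 1) (hz1 : z ≠ 1) :
    ∑ i ∈ range l, (1 + z ^ (i + 1)) * (1 + z⁻¹ ^ (i + 1)) = 2 * l - 1 := by
  have hz0 : z ≠ 0 := by rintro rfl; simp at hz
  have hterm : ∀ i ∈ range l,
      (1 + z ^ (i + 1)) * (1 + z⁻¹ ^ (i + 1)) = 2 + (z ^ (i + 1) + z⁻¹ ^ (i + 1)) := by
    intro i _
    have hcancel : z ^ (i + 1) * z⁻¹ ^ (i + 1) = 1 := by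
      rw [← mul_pow, mul_inv_cancel₀ hz0, one_pow]
    linear_combination hcancel
  rw [sum_congr rfl hterm, sum_add_distrib, sum_range_pow_succ_add_inv_pow_succ hz hz1]
  simp only [sum_const, card_range, nsmul_eq_mul]
  ring

/-- For odd `n = 2l+1`, a primitive `n`-th root of unity `ζ` and `1 ≤ k ≤ n-1`, the
matrix `C̄_k` with entries `-ξ_i ξ'_j` off the diagonal and `-ξ_i ξ'_i - 2` on the
diagonal (`ξ_i = 1 + ζ^{ik}`, `ξ'_j = 1 + ζ^{-jk}`) satisfies: `C̄_k + 2 I` has rank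
one, and its eigenvalues are `-2` with multiplicity `l-1` and `-n` with multiplicity
`1` (encoded via the characteristic polynomial). -/
theorem stmt_13 (l : ℕ) (hl : 0 < l) (k : ℕ) (hk1 : 1 ≤ k) (hk2 : k ≤ 2 * l)
    (ζ : ℂ) (hζ : IsPrimitiveRoot ζ (2 * l + 1)) :
    let ξ : Fin l → ℂ := fun i => 1 + ζ ^ (((i : ℕ) + 1) * k)
    let ξ' : Fin l → ℂ := fun j => 1 + (ζ ^ (((j : ℕ) + 1) * k))⁻¹
    let Cbar : Matrix (Fin l) (Fin l) ℂ :=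
      Matrix.of fun i j => if i = j then -(ξ i * ξ' i) - 2 else -(ξ i * ξ' j)
    (Cbar + (2 : ℂ) • (1 : Matrix (Fin l) (Fin l) ℂ)).rank = 1 ∧
    Cbar.charpoly = (Polynomial.X + Polynomial.C 2) ^ (l - 1) *
        (Polynomial.X + Polynomial.C ((2 * l + 1 : ℕ) : ℂ)) := by
  intro ξ ξ' Cbar
  set z := ζ ^ k
  have hz : z ^ (2 * l + 1) = 1 := by rw [← pow_mul, mul_comm, pow_mul, hζ.pow_eq_one, one_pow]
  have hz1 : z ≠ 1 := hζ.pow_ne_one_of_pos_of_lt (by omega) (by omega)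
  have hξ (i : Fin l) : ξ i = 1 + z ^ ((i : ℕ) + 1) := by simp only [ξ, z, ← pow_mul, mul_comm]
  have hξ' (i : Fin l) : ξ' i = 1 + z⁻¹ ^ ((i : ℕ) + 1) := by
    simp only [ξ', z, inv_pow, ← pow_mul, mul_comm]
  have hCbar : Cbar + (2 : ℂ) • 1 = vecMulVec (-ξ) ξ' := by
    ext i j
    by_cases h : i = j <;> simp [Cbar, vecMulVec_apply, one_apply, h]
  have hdot : (-ξ) ⬝ᵥ ξ' = -(2 * l - 1) := by
    rw [neg_dotProduct, dotProduct, ← sum_range_one_add_pow_mul_one_add_inv_pow hz hz1,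
      ← Fin.sum_univ_eq_sum_range (fun i => (1 + z ^ (i + 1)) * (1 + z⁻¹ ^ (i + 1)))]
    simp only [hξ, hξ']
  have hodd : Odd (2 * l + 1) := odd_two_mul_add_one l
  constructor
  · rw [hCbar]
    refine rank_vecMulVec_eq_one (neg_ne_zero.mpr fun h => ?_) fun h => ?_
    · exact one_add_pow_ne_zero_of_pow_eq_one hodd hz _ ((hξ ⟨0, hl⟩).symm.trans (congrFun h _))
    · exact one_add_pow_ne_zero_of_pow_eq_one hodd (by rw [inv_pow, hz, inv_one]) _
        ((hξ' ⟨0, hl⟩).symm.trans (congrFun h _))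
  · have : Nonempty (Fin l) := ⟨⟨0, hl⟩⟩
    rw [eq_sub_of_add_eq hCbar, smul_one_eq_diagonal, ← scalar_apply,
      charpoly_vecMulVec_sub_scalar, hdot, Fintype.card_fin, add_sub_assoc, ← C_sub]
    congr 3
    push_cast
    ring
end

section
/- Let D be a block matrix D = (D^{ij})_{1≤i,j≤l}, where D^{ij} is a 2n×2n circulant for 1 ≤ i,j ≤ l−1, D^{ll} is an n×n circulant, and for 1 ≤ i,j ≤ l−1 the mixed blocks satisfy D^{il} = (X_i; X_i) (stacked vertically) and D^{lj} = (Y_j Y_j) (side by side) with X_i, Y_j n×n circulants. For 0 ≤ k ≤ 2n−1 define the l×l matrix D̄_k by: d^{(k)}_{ij} = (D^{ij})^{(1)} z_{2n,k} for j ≤ l−1; and d^{(k)}_{il} = (D^{il})^{(1)} z_{n,k/2} if k is even, d^{(k)}_{il} = 0 if k is odd. Then the characteristic polynomial of D satisfies χ_D(t) = t^{−n} ∏_{k=0}^{2n−1} χ_{D̄_k}(t). -/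
/-!
For `k < 2n` let `W_k` consist of the vectors `(c_i z_{2n,k})_{i<l} ⊕ c_l z_{n,k/2}`, with
`c_l = 0` for odd `k`. Every `z_{m,j}` is an eigenvector of every `m × m` circulant, and for even
`k` the vector `z_{2n,k}` is two copies of `z_{n,k/2}`, so the stacked blocks `(X_i; X_i)` and
`(Y_j Y_j)` respect these vectors as well; for odd `k` the two halves of `z_{2n,k}` differ by the
sign `ζ^{nk} = -1`, so `(Y_j Y_j) z_{2n,k} = 0`. Hence `D W_k ⊆ W_k`, with matrix `D̄_k`.
By Vandermonde, the spanning vectors of all the `W_k` form a basis, so `D` is similar to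
`diag(D̄_k)` with its `n` last columns of odd frequency removed; those columns are zero, which
accounts for the factor `t^n`.
-/

open Matrix Polynomial Finset

namespace BlockCirculant

section RootOfUnitySums

variable {R : Type*} [CommRing R] {ω : R}

lemma pow_val_add {m : ℕ} (hω : ω ^ m = 1) (a b : Fin m) :
    ω ^ ((a + b : Fin m) : ℕ) = ω ^ (a : ℕ) * ω ^ (b : ℕ) := by
  rw [Fin.val_add, ← pow_eq_pow_mod _ hω, pow_add]

lemma sum_sub_mul_pow {m : ℕ} (hω : ω ^ m = 1) (v : Fin m → R) (s : Fin m) :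
    ∑ t, v (t - s) * ω ^ (t : ℕ) = ω ^ (s : ℕ) * ∑ t, v t * ω ^ (t : ℕ) := by
  have : NeZero m := ⟨s.pos.ne'⟩
  rw [mul_sum, ← Equiv.sum_comp (Equiv.addRight s)]
  refine sum_congr rfl fun t _ => ?_
  rw [Equiv.coe_addRight, add_sub_cancel_right, pow_val_add hω]
  ring

lemma sum_modNat_mul_pow {m n : ℕ} (ω : R) (g : Fin n → R) :
    ∑ t : Fin (m * n), g t.modNat * ω ^ (t : ℕ) =
      (∑ a : Fin m, ω ^ (n * a)) * ∑ u, g u * ω ^ (u : ℕ) := by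
  rw [← finProdFinEquiv.sum_comp, Fintype.sum_prod_type, sum_mul_sum]
  refine sum_congr rfl fun a _ => sum_congr rfl fun u _ => ?_
  have hmod : (finProdFinEquiv (a, u)).modNat = u :=
    congrArg Prod.snd (finProdFinEquiv.symm_apply_apply (a, u))
  rw [hmod, finProdFinEquiv_apply_val, pow_add]
  ring

lemma sum_sub_modNat_mul_pow {m n : ℕ} (hω : ω ^ n = 1) (x : Fin n → R) (s : Fin (m * n)) :
    ∑ t, x (t - s.modNat) * ω ^ (t : ℕ) = ω ^ (s : ℕ) * ∑ t, x t * ω ^ (t : ℕ) := by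
  rw [sum_sub_mul_pow hω, pow_eq_pow_mod (s : ℕ) hω]
  rfl

lemma sum_modNat_sub_mul_pow {m n : ℕ} (hω : ω ^ n = 1) (y : Fin n → R) (s : Fin n) :
    ∑ t : Fin (m * n), y (t.modNat - s) * ω ^ (t : ℕ) =
      ω ^ (s : ℕ) * ∑ t : Fin (m * n), y t.modNat * ω ^ (t : ℕ) := by
  rw [sum_modNat_mul_pow ω (fun u => y (u - s)), sum_modNat_mul_pow, sum_sub_mul_pow hω]
  ring

end RootOfUnitySums

section Charpoly

variable {R : Type*} [CommRing R] {ι κ ν : Type*} [Fintype ι] [Fintype κ] [DecidableEq κ]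
  [Fintype ν] [DecidableEq ν]

def concatCols {β : Type*} (Q : κ → Matrix ι β R) : Matrix ι (β × κ) R :=
  of fun i p => Q p.2 i p.1

theorem mul_concatCols_eq_concatCols_mul_blockDiagonal {β : Type*} [Fintype β] [DecidableEq β]
    {M : Matrix ι ι R} {Q : κ → Matrix ι β R} {N : κ → Matrix β β R}
    (h : ∀ k, M * Q k = Q k * N k) : M * concatCols Q = concatCols Q * blockDiagonal N := by
  ext i ⟨p, k⟩
  simpa [concatCols, mul_apply, blockDiagonal_apply, Fintype.sum_prod_type]
    using congr_fun₂ (h k) i p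

variable [DecidableEq ι]

theorem charpoly_blockDiagonal (M : κ → Matrix ι ι R) :
    (blockDiagonal M).charpoly = ∏ k, (M k).charpoly := by
  simp only [charpoly, ← det_blockDiagonal]
  congr 1
  ext ⟨i, k⟩ ⟨j, k'⟩
  by_cases hk : k = k'
  · subst hk
    by_cases hij : i = j <;> simp [blockDiagonal_apply, hij]
  · simp [blockDiagonal_apply, hk]

theorem charpoly_eq_of_mul_eq_mul {M N Q : Matrix ι ι R} (hQ : IsUnit Q.det)
    (h : M * Q = Q * N) : M.charpoly = N.charpoly := by
  have hM : M = Q * (N * Q⁻¹) := by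
    rw [← Matrix.mul_assoc, ← h, mul_nonsing_inv_cancel_right Q M hQ]
  rw [hM, charpoly_mul_comm, Matrix.mul_assoc, nonsing_inv_mul _ hQ, Matrix.mul_one]

/-- Reindexed by `e`, `N` is block lower triangular with a zero lower-right block, and its
upper-left block is similar to `M` through the columns `e ∘ inl` of `Q`. -/
theorem charpoly_eq_mul_X_pow_of_mul_eq_mul (e : ι ⊕ ν ≃ κ) {M : Matrix ι ι R}
    {Q : Matrix ι κ R} {N : Matrix κ κ R} (h : M * Q = Q * N)
    (hQ : ∀ i b, Q i (e (.inr b)) = 0) (hN : ∀ c b, N c (e (.inr b)) = 0)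
    (hdet : IsUnit (Q.submatrix id (e ∘ .inl)).det) :
    N.charpoly = M.charpoly * X ^ Fintype.card ν := by
  set B := N.submatrix e e
  have hB : B = fromBlocks B.toBlocks₁₁ 0 B.toBlocks₂₁ 0 := by
    ext (i | b) (j | b') <;> simp [B, hN, toBlocks₁₁, toBlocks₂₁]
  have hMB : M * Q.submatrix id (e ∘ .inl) = Q.submatrix id (e ∘ .inl) * B.toBlocks₁₁ := by
    ext i j
    have hij := congr_fun₂ h i (e (.inl j))
    simp only [mul_apply, submatrix_apply, id, Function.comp_apply] at hij ⊢
    rw [hij, ← Equiv.sum_comp e, Fintype.sum_sum_type]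
    simp [B, toBlocks₁₁, hQ]
  rw [← charpoly_reindex e.symm N, reindex_apply, Equiv.symm_symm]
  change B.charpoly = _
  rw [hB, charpoly_fromBlocks_zero₁₂, charpoly_zero, charpoly_eq_of_mul_eq_mul hdet hMB]

end Charpoly

def evenOddEquiv (n : ℕ) : Fin n ⊕ Fin n ≃ Fin (2 * n) where
  toFun := Sum.elim (fun m => ⟨2 * m, by omega⟩) (fun m => ⟨2 * m + 1, by omega⟩)
  invFun k := if (k : ℕ) % 2 = 0 then .inl ⟨k / 2, by omega⟩ else .inr ⟨k / 2, by omega⟩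
  left_inv := by
    rintro (m | m)
    · simp
    · simp
      ext
      dsimp only
      omega
  right_inv k := by
    by_cases h : (k : ℕ) % 2 = 0 <;> simp [h] <;> ext <;> simp <;> omega

/-- The last summand collects the columns `(inr (), 2m + 1)` of the odd frequencies. -/
def modeIndexEquiv (α : Type*) (n : ℕ) :
    ((α × Fin (2 * n)) ⊕ Fin n) ⊕ Fin n ≃ (α ⊕ Unit) × Fin (2 * n) :=
  (Equiv.sumAssoc _ _ _).trans <|
    (Equiv.sumCongr (Equiv.refl _) ((evenOddEquiv n).trans (Equiv.punitProd _).symm)).trans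
      (Equiv.sumProdDistrib _ _ _).symm

section BlockMatrix

variable {R : Type*} [CommRing R] {α : Type*} {n : ℕ}

/-- The matrix `D` of the paper, built from the first rows `a i j`, `x i`, `y j`, `b` of the
circulants `D^{ij}`, `X_i`, `Y_j`, `D^{ll}`. -/
def blockCirculant (a : α → α → Fin (2 * n) → R) (x y : α → Fin n → R) (b : Fin n → R) :
    Matrix ((α × Fin (2 * n)) ⊕ Fin n) ((α × Fin (2 * n)) ⊕ Fin n) R :=
  fromBlocks (of fun p q => a p.1 q.1 (q.2 - p.2)) (of fun p t => x p.1 (t - p.2.modNat))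
    (of fun s q => y q.1 (q.2.modNat - s)) (of fun s t => b (t - s))

def reducedMatrix (a : α → α → Fin (2 * n) → R) (x y : α → Fin n → R) (b : Fin n → R)
    (ζ : R) (k : ℕ) : Matrix (α ⊕ Unit) (α ⊕ Unit) R :=
  fromBlocks (of fun i j => ∑ t, a i j t * (ζ ^ k) ^ (t : ℕ))
    (of fun i _ => if Even k then ∑ t, x i t * (ζ ^ k) ^ (t : ℕ) else 0)
    (of fun _ j => ∑ t : Fin (2 * n), y j t.modNat * (ζ ^ k) ^ (t : ℕ))
    (of fun _ _ => if Even k then ∑ t, b t * (ζ ^ k) ^ (t : ℕ) else 0)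

/-- The columns span the space `W_k`: column `inl j` is `e_j ⊗ z_{2n,k}`, column `inr ()` is
`0 ⊕ z_{n,k/2}` for even `k` and zero for odd `k`. -/
def modeMatrix (α : Type*) [DecidableEq α] (n : ℕ) (ζ : R) (k : ℕ) :
    Matrix ((α × Fin (2 * n)) ⊕ Fin n) (α ⊕ Unit) R :=
  fromBlocks (of fun p j => if p.1 = j then (ζ ^ k) ^ (p.2 : ℕ) else 0) 0 0
    (of fun s _ => if Even k then (ζ ^ k) ^ (s : ℕ) else 0)

variable (a : α → α → Fin (2 * n) → R) (x y : α → Fin n → R) (b : Fin n → R) {ζ : R}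

theorem blockDiagonal_reducedMatrix_modeIndexEquiv_inr (c) (m : Fin n) :
    blockDiagonal (fun k : Fin (2 * n) => reducedMatrix a x y b ζ k) c
      (modeIndexEquiv α n (.inr m)) = 0 := by
  rcases c with ⟨i | i, k⟩ <;>
    simp [blockDiagonal_apply, modeIndexEquiv, evenOddEquiv, reducedMatrix] <;>
    rintro rfl <;> simp

variable [DecidableEq α]

variable (α n) in
theorem concatCols_modeMatrix_modeIndexEquiv_inr (ζ : R) (i) (m : Fin n) :
    concatCols (fun k : Fin (2 * n) => modeMatrix α n ζ k) i
      (modeIndexEquiv α n (.inr m)) = 0 := by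
  rcases i with i | i <;> simp [concatCols, modeIndexEquiv, evenOddEquiv, modeMatrix]

variable [Fintype α]

theorem blockCirculant_mul_modeMatrix (hζ : ζ ^ n = -1) (k : ℕ) :
    blockCirculant a x y b * modeMatrix α n ζ k =
      modeMatrix α n ζ k * reducedMatrix a x y b ζ k := by
  have h2n : (ζ ^ k) ^ (2 * n) = 1 := by
    rw [pow_right_comm, pow_mul', hζ, neg_one_sq, one_pow]
  have hn_even (hk : Even k) : (ζ ^ k) ^ n = 1 := by
    rw [pow_right_comm, hζ, hk.neg_one_pow]
  have hfold_odd (hk : ¬Even k) : ∑ a : Fin 2, (ζ ^ k) ^ (n * (a : ℕ)) = 0 := by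
    have hodd : (ζ ^ k) ^ n = -1 := by
      rw [pow_right_comm, hζ, (Nat.not_even_iff_odd.mp hk).neg_one_pow]
    simp [Fin.sum_univ_two, hodd]
  unfold blockCirculant modeMatrix reducedMatrix
  rw [fromBlocks_multiply, fromBlocks_multiply]
  simp only [Matrix.mul_zero, Matrix.zero_mul, add_zero, zero_add]
  congr 1 <;> ext p j
  · simp [mul_apply, Fintype.sum_prod_type, sum_sub_mul_pow h2n]
  · by_cases hk : Even k
    · simp [mul_apply, hk, sum_sub_modNat_mul_pow (hn_even hk)]
    · simp [mul_apply, hk]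
  · by_cases hk : Even k
    · simp [mul_apply, Fintype.sum_prod_type, hk, sum_modNat_sub_mul_pow (hn_even hk)]
    · simp [mul_apply, Fintype.sum_prod_type, hk,
        sum_modNat_mul_pow (ζ ^ k) (fun u => y j (u - p)), hfold_odd hk]
  · by_cases hk : Even k
    · simp [mul_apply, hk, sum_sub_mul_pow (hn_even hk)]
    · simp [mul_apply, hk]

end BlockMatrix

section Field

variable {K : Type*} [Field K] {α : Type*} [Fintype α] [DecidableEq α] {n : ℕ} {ζ : K}

theorem det_concatCols_modeMatrix_submatrix_ne_zero (hζ : IsPrimitiveRoot ζ (2 * n)) :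
    ((concatCols fun k : Fin (2 * n) => modeMatrix α n ζ k).submatrix id
      (modeIndexEquiv α n ∘ .inl)).det ≠ 0 := by
  have hV : (vandermonde fun s : Fin (2 * n) => ζ ^ (s : ℕ)).det ≠ 0 :=
    det_vandermonde_ne_zero_iff.mpr fun i j h => Fin.ext (hζ.pow_inj i.isLt j.isLt h)
  have hW : (vandermonde fun s : Fin n => ζ ^ (2 * (s : ℕ))).det ≠ 0 :=
    det_vandermonde_ne_zero_iff.mpr fun i j h => Fin.ext <| by
      have := hζ.pow_inj (by omega) (by omega) h
      omega
  have hblocks : (concatCols fun k : Fin (2 * n) => modeMatrix α n ζ k).submatrix id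
      (modeIndexEquiv α n ∘ .inl) = fromBlocks (kroneckerMap (· * ·) 1
        (vandermonde fun s : Fin (2 * n) => ζ ^ (s : ℕ))) 0 0
        (vandermonde fun s : Fin n => ζ ^ (2 * (s : ℕ))) := by
    ext (⟨i, s⟩ | s) (⟨j, k⟩ | m)
    all_goals simp [concatCols, modeIndexEquiv, evenOddEquiv, modeMatrix, one_apply]
    · rw [pow_right_comm]
    · ring
  rw [hblocks, det_fromBlocks_zero₂₁, det_kronecker, det_one, one_pow, one_mul]
  exact mul_ne_zero (pow_ne_zero _ hV) hW

theorem X_pow_mul_charpoly_blockCirculant (a : α → α → Fin (2 * n) → K) (x y : α → Fin n → K)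
    (b : Fin n → K) (hn : 0 < n) (hζ : IsPrimitiveRoot ζ (2 * n)) :
    X ^ n * (blockCirculant a x y b).charpoly =
      ∏ k : Fin (2 * n), (reducedMatrix a x y b ζ k).charpoly := by
  have hζn : ζ ^ n = -1 := (hζ.pow (by omega) (mul_comm 2 n)).eq_neg_one_of_two_right
  rw [← charpoly_blockDiagonal, charpoly_eq_mul_X_pow_of_mul_eq_mul (modeIndexEquiv α n)
      (mul_concatCols_eq_concatCols_mul_blockDiagonal fun k =>
        blockCirculant_mul_modeMatrix a x y b hζn k)
      (concatCols_modeMatrix_modeIndexEquiv_inr α n ζ)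
      (blockDiagonal_reducedMatrix_modeIndexEquiv_inr a x y b)
      (isUnit_iff_ne_zero.mpr (det_concatCols_modeMatrix_submatrix_ne_zero hζ)),
    Fintype.card_fin, mul_comm]

end Field

end BlockCirculant

/-- For the block matrix `D` with `2n × 2n` circulant blocks `D^{ij}` (`i,j ≤ l-1`), an
`n × n` circulant block `D^{ll}`, and mixed blocks `D^{il} = (X_i; X_i)` (stacked) and
`D^{lj} = (Y_j Y_j)` (side by side) with `X_i, Y_j` circulant, the characteristic
polynomial of `D` satisfies `t^n · χ_D(t) = ∏_{k=0}^{2n-1} χ_{D̄_k}(t)`, where `D̄_k`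
is the `l × l` matrix built from the first rows of the blocks dotted with `z_{2n,k}`
(resp. `z_{n,k/2}` for the last column when `k` is even, `0` when `k` is odd). -/
theorem stmt_19 (l n : ℕ) (hn : 0 < n)
    (Dbig : Fin (l - 1) → Fin (l - 1) → Matrix (Fin (2 * n)) (Fin (2 * n)) ℂ)
    (Xm Ym : Fin (l - 1) → Matrix (Fin n) (Fin n) ℂ)
    (Dll : Matrix (Fin n) (Fin n) ℂ)
    (hDbig : ∀ i j s t, Dbig i j s t = Dbig i j ⟨0, by omega⟩ (t - s))
    (hX : ∀ i s t, Xm i s t = Xm i ⟨0, hn⟩ (t - s))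
    (hY : ∀ j s t, Ym j s t = Ym j ⟨0, hn⟩ (t - s))
    (hDll : ∀ s t, Dll s t = Dll ⟨0, hn⟩ (t - s))
    (ζ : ℂ) (hζ : IsPrimitiveRoot ζ (2 * n)) :
    let modn : Fin (2 * n) → Fin n := fun s => ⟨(s : ℕ) % n, Nat.mod_lt _ hn⟩
    let D : Matrix ((Fin (l - 1) × Fin (2 * n)) ⊕ Fin n)
        ((Fin (l - 1) × Fin (2 * n)) ⊕ Fin n) ℂ :=
      Matrix.of fun p q =>
        match p, q with
        | Sum.inl (i, s), Sum.inl (j, t) => Dbig i j s t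
        | Sum.inl (i, s), Sum.inr t => Xm i (modn s) t
        | Sum.inr s, Sum.inl (j, t) => Ym j s (modn t)
        | Sum.inr s, Sum.inr t => Dll s t
    let Dbar : Fin (2 * n) → Matrix (Fin (l - 1) ⊕ Unit) (Fin (l - 1) ⊕ Unit) ℂ :=
      fun k =>
      Matrix.of fun p q =>
        match p, q with
        | Sum.inl i, Sum.inl j =>
            ∑ t : Fin (2 * n), Dbig i j ⟨0, by omega⟩ t * ζ ^ ((t : ℕ) * (k : ℕ))
        | Sum.inl i, Sum.inr _ =>
            if Even (k : ℕ) then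
              ∑ t : Fin n, Xm i ⟨0, hn⟩ t * (ζ ^ 2) ^ ((t : ℕ) * ((k : ℕ) / 2))
            else 0
        | Sum.inr _, Sum.inl j =>
            ∑ t : Fin (2 * n), Ym j ⟨0, hn⟩ (modn t) * ζ ^ ((t : ℕ) * (k : ℕ))
        | Sum.inr _, Sum.inr _ =>
            if Even (k : ℕ) then
              ∑ t : Fin n, Dll ⟨0, hn⟩ t * (ζ ^ 2) ^ ((t : ℕ) * ((k : ℕ) / 2))
            else 0
    Polynomial.X ^ n * D.charpoly = ∏ k : Fin (2 * n), (Dbar k).charpoly := by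
  intro modn D Dbar
  have hD : D = BlockCirculant.blockCirculant (fun i j => Dbig i j ⟨0, by omega⟩)
      (fun i => Xm i ⟨0, hn⟩) (fun j => Ym j ⟨0, hn⟩) (Dll ⟨0, hn⟩) := by
    ext (⟨i, s⟩ | s) (⟨j, t⟩ | t)
    · exact hDbig i j s t
    · exact hX i _ t
    · exact hY j s _
    · exact hDll s t
  have hDbar : Dbar = fun k : Fin (2 * n) =>
      BlockCirculant.reducedMatrix (fun i j => Dbig i j ⟨0, by omega⟩)
        (fun i => Xm i ⟨0, hn⟩) (fun j => Ym j ⟨0, hn⟩) (Dll ⟨0, hn⟩) ζ k := by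
    have hpow (k t : ℕ) (hk : Even k) : (ζ ^ 2) ^ (t * (k / 2)) = (ζ ^ k) ^ t := by
      obtain ⟨r, rfl⟩ := hk
      rw [show (r + r) / 2 = r by omega]
      ring
    funext k
    ext (i | _) (j | _)
    all_goals simp +contextual [Dbar, BlockCirculant.reducedMatrix, pow_mul', hpow]
    rfl
  rw [hD, hDbar]
  exact BlockCirculant.X_pow_mul_charpoly_blockCirculant _ _ _ _ hn hζ
end
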